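/- There exists a constant C > 0 such that the following holds. For every Δ with 0 < Δ < 1/2 there exist m ∈ ℕ with m ≤ C/Δ² and unitary matrices U_1, …, U_m ∈ U(ℂ^2 ⊗ ℂ^2 ⊗ ℂ^2) (indexed by Fin 2 × Fin 2 × Fin 2), each of which acts nontrivially only on qubits {1,2} or only on qubits {2,3} — i.e. each U_t satisfies either U_t((a,b,c),(a',b',c')) = A((a,b),(a',b'))·[c = c'] for some unitary A on ℂ^2 ⊗ ℂ^2, or U_t((a,b,c),(a',b',c')) = [a = a']·A((b,c),(b',c')) for some unitary A on ℂ^2 ⊗ ℂ^2 — such that: (1) U_m ⋯ U_1 |000⟩ = |111⟩, and (2) for every i ∈ [m], the intermediate state v_i := U_i ⋯ U_1 |000⟩ satisfies 1 − |⟨000|v_i⟩|² − |⟨111|v_i⟩|² ≤ Δ. -/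

import Mathlib

/-- The state obtained after applying the first `k` of the matrices `U 0, U 1, …` to `v`. -/
noncomputable def applySeq {n : Type*} [Fintype n]
    (U : ℕ → Matrix n n ℂ) (v : n → ℂ) : ℕ → n → ℂ
  | 0 => v
  | k + 1 => (U k).mulVec (applySeq U v k)

/-- The computational basis state `|p⟩` of the three-qubit space. -/
noncomputable def basisState3 (p : Fin 2 × Fin 2 × Fin 2) : Fin 2 × Fin 2 × Fin 2 → ℂ :=
  Pi.single p 1

/-! The states used live in the real span of `|000⟩, |100⟩, |011⟩, |111⟩`. Writing such a state
as a pair `(z, w) = (x₀₀₀ + i x₁₀₀, x₀₁₁ + i x₁₁₁)`, a rotation of qubit 1 controlled by qubit 2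
multiplies `z` and `w` by independent phases, a rotation of qubit 2 in the even-parity sector of
qubits 2, 3 rotates the real pair `(z, w)`, and the leakage of a unit state is `(Im z)² + (Re w)²`.

Tilting the phases so that `z ∈ ℝ₊ (u + i t)` and `w ∈ ℝ₊ (t + i u)` with `t² = Δ/2` costs
leakage exactly `Δ/2`, and a rotation with small sine `s = Δ/8` then costs at most `t² + s² ≤ Δ`.
Since the tilted `z` and `w` are not orthogonal as real vectors, that rotation lowers `‖z‖²` by at
least `s²/2` as long as `‖z‖² > Δ/2`. After `O(1/Δ²)` such double steps `‖z‖² ≤ Δ/2`, and two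
last gates reach `|111⟩`: phases making `z, w` purely imaginary, then the rotation taking
`(i‖z‖, i‖w‖)` to `(0, i)`. -/

open Matrix Kronecker

section GateReach

variable {n : Type*} [Fintype n]

theorem applySeq_congr {U V : ℕ → Matrix n n ℂ} (v : n → ℂ) {k : ℕ} (h : ∀ t < k, U t = V t) :
    applySeq U v k = applySeq V v k := by
  induction k with
  | zero => rfl
  | succ k ih => simp only [applySeq, h k k.lt_succ_self, ih fun t ht => h t (by omega)]

def GateReach (Allowed : Matrix n n ℂ → Prop) (Good : (n → ℂ) → Prop) (m : ℕ)
    (v w : n → ℂ) : Prop :=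
  ∃ U : ℕ → Matrix n n ℂ, (∀ t < m, Allowed (U t)) ∧ applySeq U v m = w ∧
    ∀ i, 1 ≤ i → i ≤ m → Good (applySeq U v i)

variable {Allowed : Matrix n n ℂ → Prop} {Good : (n → ℂ) → Prop}

theorem GateReach.refl (v : n → ℂ) : GateReach Allowed Good 0 v v :=
  ⟨fun _ => 0, fun _ h => absurd h (Nat.not_lt_zero _), rfl, fun _ _ _ => by omega⟩

theorem GateReach.snoc {m : ℕ} {u v w : n → ℂ} (h : GateReach Allowed Good m u v)
    {V : Matrix n n ℂ} (hV : Allowed V) (hw : V *ᵥ v = w) (hGood : Good w) :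
    GateReach Allowed Good (m + 1) u w := by
  obtain ⟨U, hU, hv, hU_good⟩ := h
  have hprefix : ∀ i ≤ m, applySeq (Function.update U m V) u i = applySeq U u i :=
    fun i hi => applySeq_congr u fun t ht => Function.update_of_ne (by omega : t ≠ m) V U
  have hlast : applySeq (Function.update U m V) u (m + 1) = w := by
    rw [applySeq, hprefix m le_rfl, hv, Function.update_self, hw]
  refine ⟨Function.update U m V, fun t ht => ?_, hlast, fun i hi₁ hi₂ => ?_⟩
  · rcases Nat.lt_succ_iff_lt_or_eq.mp ht with ht | rfl
    · rw [Function.update_of_ne ht.ne]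
      exact hU t ht
    · rwa [Function.update_self]
  · rcases Nat.lt_or_eq_of_le hi₂ with hi | rfl
    · rw [hprefix i (Nat.lt_succ_iff.mp hi)]
      exact hU_good i hi₁ (Nat.lt_succ_iff.mp hi)
    · rwa [hlast]

end GateReach

theorem exists_le_of_descent {S : Type*} (R : ℕ → S → Prop) (φ : S → ℝ) {θ δ : ℝ} {s₀ : S}
    (h₀ : R 0 s₀) (hstep : ∀ k s, R k s → θ < φ s → ∃ s', R (k + 1) s' ∧ φ s' ≤ φ s - δ)
    (n : ℕ) (hn : φ s₀ - n * δ ≤ θ) : ∃ k ≤ n, ∃ s, R k s ∧ φ s ≤ θ := by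
  have key : ∀ n : ℕ, ∃ k ≤ n, ∃ s, R k s ∧ (φ s ≤ θ ∨ φ s ≤ φ s₀ - n * δ) := by
    intro n
    induction n with
    | zero => exact ⟨0, le_rfl, s₀, h₀, Or.inr (by simp)⟩
    | succ n ih =>
      obtain ⟨k, hk, s, hs, hφ⟩ := ih
      by_cases hθ : φ s ≤ θ
      · exact ⟨k, by omega, s, hs, Or.inl hθ⟩
      · obtain ⟨s', hs', hφ'⟩ := hstep k s hs (not_le.mp hθ)
        refine ⟨k + 1, by omega, s', hs', Or.inr ?_⟩
        have := hφ.resolve_left hθ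
        push_cast
        linarith
  obtain ⟨k, hk, s, hs, hφ⟩ := key n
  exact ⟨k, hk, s, hs, hφ.elim id fun h => h.trans hn⟩

theorem exists_norm_eq_one_mul_eq {𝕜 : Type*} [NormedDivisionRing 𝕜] {x y : 𝕜}
    (h : ‖x‖ = ‖y‖) : ∃ d : 𝕜, ‖d‖ = 1 ∧ d * x = y := by
  rcases eq_or_ne x 0 with rfl | hx
  · exact ⟨1, norm_one, by simpa [eq_comm] using h⟩
  · refine ⟨y * x⁻¹, ?_, by rw [mul_assoc, inv_mul_cancel₀ hx, mul_one]⟩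
    rw [norm_mul, norm_inv, ← h, mul_inv_cancel₀ (norm_ne_zero_iff.mpr hx)]

theorem Complex.norm_mk_of_sq_add_sq {x y r : ℝ} (hr : 0 ≤ r) (h : x ^ 2 + y ^ 2 = r ^ 2) :
    ‖(⟨x, y⟩ : ℂ)‖ = r := by
  rw [Complex.norm_def, Complex.normSq_mk, ← sq, ← sq, h, Real.sqrt_sq hr]

section Unitary

variable {m n o : Type*} [Fintype m] [DecidableEq m] [Fintype n] [DecidableEq n]
  [Fintype o] [DecidableEq o] {α : Type*} [CommRing α] [StarRing α]

theorem Matrix.submatrix_mem_unitaryGroup {U : Matrix n n α} (hU : U ∈ unitaryGroup n α)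
    (e : m ≃ n) : U.submatrix e e ∈ unitaryGroup m α := by
  rw [mem_unitaryGroup_iff'] at hU ⊢
  rw [star_eq_conjTranspose, conjTranspose_submatrix, submatrix_mul_equiv,
    ← star_eq_conjTranspose, hU, submatrix_one_equiv]

theorem Matrix.blockDiagonal_mem_unitaryGroup {M : o → Matrix m m α}
    (hM : ∀ k, M k ∈ unitaryGroup m α) : blockDiagonal M ∈ unitaryGroup (m × o) α := by
  rw [mem_unitaryGroup_iff', star_eq_conjTranspose, blockDiagonal_conjTranspose,
    ← blockDiagonal_mul, ← blockDiagonal_one]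
  exact congrArg blockDiagonal (funext fun k => mem_unitaryGroup_iff'.mp (hM k))

end Unitary

/-- The real rotation matrix of multiplication by `d` on `ℂ ≅ ℝ²`. -/
noncomputable def rotationMatrix (d : ℂ) : Matrix (Fin 2) (Fin 2) ℂ :=
  !![(d.re : ℂ), -d.im; d.im, d.re]

theorem rotationMatrix_mem_unitaryGroup {d : ℂ} (hd : ‖d‖ = 1) :
    rotationMatrix d ∈ unitaryGroup (Fin 2) ℂ := by
  have h : d.re ^ 2 + d.im ^ 2 = 1 := by
    have := Complex.sq_norm d
    rw [hd, Complex.normSq_apply] at this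
    nlinarith
  rw [mem_unitaryGroup_iff]
  ext i j
  fin_cases i <;> fin_cases j <;>
    simp [rotationMatrix, Matrix.mul_apply, Fin.sum_univ_two, Complex.ext_iff] <;> nlinarith

abbrev TwoQubits := Fin 2 × Fin 2

abbrev ThreeQubits := Fin 2 × Fin 2 × Fin 2

def IsTwoLocal (U : Matrix ThreeQubits ThreeQubits ℂ) : Prop :=
  U ∈ unitaryGroup ThreeQubits ℂ ∧
    ((∃ A ∈ unitaryGroup TwoQubits ℂ, ∀ a b c a' b' c',
        U (a, b, c) (a', b', c') = A (a, b) (a', b') * (if c = c' then 1 else 0)) ∨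
      (∃ A ∈ unitaryGroup TwoQubits ℂ, ∀ a b c a' b' c',
        U (a, b, c) (a', b', c') = (if a = a' then 1 else 0) * A (b, c) (b', c')))

def onQubits12 (A : Matrix TwoQubits TwoQubits ℂ) : Matrix ThreeQubits ThreeQubits ℂ :=
  (A ⊗ₖ (1 : Matrix (Fin 2) (Fin 2) ℂ)).submatrix (Equiv.prodAssoc _ _ _).symm
    (Equiv.prodAssoc _ _ _).symm

def onQubits23 (B : Matrix TwoQubits TwoQubits ℂ) : Matrix ThreeQubits ThreeQubits ℂ :=
  (1 : Matrix (Fin 2) (Fin 2) ℂ) ⊗ₖ B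

theorem onQubits12_apply (A : Matrix TwoQubits TwoQubits ℂ) (a b c a' b' c' : Fin 2) :
    onQubits12 A (a, b, c) (a', b', c') = A (a, b) (a', b') * if c = c' then 1 else 0 := by
  simp [onQubits12, one_apply]

theorem onQubits23_apply (B : Matrix TwoQubits TwoQubits ℂ) (a b c a' b' c' : Fin 2) :
    onQubits23 B (a, b, c) (a', b', c') = (if a = a' then 1 else 0) * B (b, c) (b', c') := by
  simp [onQubits23, one_apply]

theorem isTwoLocal_onQubits12 {A : Matrix TwoQubits TwoQubits ℂ}
    (hA : A ∈ unitaryGroup TwoQubits ℂ) : IsTwoLocal (onQubits12 A) :=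
  ⟨submatrix_mem_unitaryGroup (kronecker_mem_unitary hA (one_mem _)) _,
    Or.inl ⟨A, hA, onQubits12_apply A⟩⟩

theorem isTwoLocal_onQubits23 {B : Matrix TwoQubits TwoQubits ℂ}
    (hB : B ∈ unitaryGroup TwoQubits ℂ) : IsTwoLocal (onQubits23 B) :=
  ⟨kronecker_mem_unitary (one_mem _) hB, Or.inr ⟨B, hB, onQubits23_apply B⟩⟩

/-- Rotation of the first qubit by `d₀` or `d₁` according to the second. -/
noncomputable def controlledRotation (d₀ d₁ : ℂ) : Matrix TwoQubits TwoQubits ℂ :=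
  blockDiagonal ![rotationMatrix d₀, rotationMatrix d₁]

/-- Rotation of the first qubit by `d` on `|00⟩, |11⟩`, the identity on `|01⟩, |10⟩`. -/
noncomputable def evenParityRotation (d : ℂ) : Matrix TwoQubits TwoQubits ℂ :=
  (blockDiagonal ![rotationMatrix d, 1]).submatrix (Equiv.prodShear (Equiv.refl _) Equiv.addLeft)
    (Equiv.prodShear (Equiv.refl _) Equiv.addLeft)

theorem controlledRotation_mem_unitaryGroup {d₀ d₁ : ℂ} (h₀ : ‖d₀‖ = 1) (h₁ : ‖d₁‖ = 1) :
    controlledRotation d₀ d₁ ∈ unitaryGroup TwoQubits ℂ :=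
  blockDiagonal_mem_unitaryGroup <| Fin.forall_fin_two.mpr
    ⟨rotationMatrix_mem_unitaryGroup h₀, rotationMatrix_mem_unitaryGroup h₁⟩

theorem evenParityRotation_mem_unitaryGroup {d : ℂ} (hd : ‖d‖ = 1) :
    evenParityRotation d ∈ unitaryGroup TwoQubits ℂ := by
  refine submatrix_mem_unitaryGroup (blockDiagonal_mem_unitaryGroup ?_) _
  exact Fin.forall_fin_two.mpr ⟨rotationMatrix_mem_unitaryGroup hd, one_mem _⟩

noncomputable def pairState (z w : ℂ) : ThreeQubits → ℂ := fun p =>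
  if p = (0, 0, 0) then (z.re : ℂ)
  else if p = (1, 0, 0) then (z.im : ℂ)
  else if p = (0, 1, 1) then (w.re : ℂ)
  else if p = (1, 1, 1) then (w.im : ℂ) else 0

theorem pairState_one_zero : pairState 1 0 = basisState3 (0, 0, 0) := by
  ext ⟨a, b, c⟩
  fin_cases a <;> fin_cases b <;> fin_cases c <;> simp [pairState, basisState3]

theorem pairState_zero_I : pairState 0 Complex.I = basisState3 (1, 1, 1) := by
  ext ⟨a, b, c⟩
  fin_cases a <;> fin_cases b <;> fin_cases c <;> simp [pairState, basisState3]

theorem onQubits12_controlledRotation_mulVec (d₀ d₁ z w : ℂ) :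
    onQubits12 (controlledRotation d₀ d₁) *ᵥ pairState z w = pairState (d₀ * z) (d₁ * w) := by
  ext ⟨a, b, c⟩
  simp only [mulVec, dotProduct, Fintype.sum_prod_type, Fin.sum_univ_two, onQubits12_apply]
  fin_cases a <;> fin_cases b <;> fin_cases c <;>
    simp [controlledRotation, rotationMatrix, pairState, blockDiagonal_apply, Complex.ext_iff] <;>
    ring

theorem onQubits23_evenParityRotation_mulVec (d z w : ℂ) :
    onQubits23 (evenParityRotation d) *ᵥ pairState z w
      = pairState (d.re * z - d.im * w) (d.im * z + d.re * w) := by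
  ext ⟨a, b, c⟩
  simp only [mulVec, dotProduct, Fintype.sum_prod_type, Fin.sum_univ_two, onQubits23_apply]
  fin_cases a <;> fin_cases b <;> fin_cases c <;>
    simp [evenParityRotation, rotationMatrix, pairState, blockDiagonal_apply, Complex.ext_iff] <;>
    ring

noncomputable def leakage (v : ThreeQubits → ℂ) : ℝ :=
  1 - ‖v (0, 0, 0)‖ ^ 2 - ‖v (1, 1, 1)‖ ^ 2

theorem leakage_pairState (z w : ℂ) : leakage (pairState z w) = 1 - z.re ^ 2 - w.im ^ 2 := by
  simp [leakage, pairState, Complex.norm_real]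

section Reach

variable {Δ : ℝ} {m : ℕ} {v : ThreeQubits → ℂ} {z w : ℂ}

theorem GateReach.phase (h : GateReach IsTwoLocal (leakage · ≤ Δ) m v (pairState z w))
    {z' w' : ℂ} (hz : ‖z‖ = ‖z'‖) (hw : ‖w‖ = ‖w'‖) (hleak : leakage (pairState z' w') ≤ Δ) :
    GateReach IsTwoLocal (leakage · ≤ Δ) (m + 1) v (pairState z' w') := by
  obtain ⟨d₀, hd₀, rfl⟩ := exists_norm_eq_one_mul_eq hz
  obtain ⟨d₁, hd₁, rfl⟩ := exists_norm_eq_one_mul_eq hw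
  exact h.snoc (isTwoLocal_onQubits12 (controlledRotation_mem_unitaryGroup hd₀ hd₁))
    (onQubits12_controlledRotation_mulVec _ _ _ _) hleak

theorem GateReach.rotate (h : GateReach IsTwoLocal (leakage · ≤ Δ) m v (pairState z w))
    {c s : ℝ} (hcs : c ^ 2 + s ^ 2 = 1)
    (hleak : leakage (pairState (c * z - s * w) (s * z + c * w)) ≤ Δ) :
    GateReach IsTwoLocal (leakage · ≤ Δ) (m + 1) v (pairState (c * z - s * w) (s * z + c * w)) :=
  h.snoc (isTwoLocal_onQubits23 (evenParityRotation_mem_unitaryGroup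
    (Complex.norm_mk_of_sq_add_sq zero_le_one (by rw [hcs, one_pow]))))
    (onQubits23_evenParityRotation_mulVec ⟨c, s⟩ z w) hleak

end Reach

theorem rotate_tilted_sq_le {a b c s t u : ℝ} (ha : 0 ≤ a) (hb : 0 ≤ b) (hab : a ^ 2 + b ^ 2 = 1)
    (ht : 0 ≤ t) (htu : t ^ 2 + u ^ 2 = 1) (hta : t ≤ a) (hc : 1 / 2 ≤ c) (hu : 1 / 2 ≤ u)
    (hs : 0 ≤ s) (hst : 3 * s ≤ t ^ 2) (hcs : c ^ 2 + s ^ 2 = 1) :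
    (c * a * u - s * b * t) ^ 2 + (c * a * t - s * b * u) ^ 2 ≤ a ^ 2 - s ^ 2 / 2 := by
  have hdrop : (c * a * u - s * b * t) ^ 2 + (c * a * t - s * b * u) ^ 2
      = a ^ 2 - (s ^ 2 * (a ^ 2 - b ^ 2) + 4 * c * s * t * u * (a * b)) := by
    linear_combination (c ^ 2 * a ^ 2 + s ^ 2 * b ^ 2) * htu + a ^ 2 * hcs
  rw [hdrop]
  rcases le_or_gt (3 / 4) (a ^ 2) with h | h
  · have : 0 ≤ 4 * c * s * t * u * (a * b) := by positivity
    nlinarith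
  · have hb2 : 1 / 2 ≤ b := by nlinarith
    have : s * t ^ 2 / 2 ≤ 4 * c * s * t * u * (a * b) :=
      calc s * t ^ 2 / 2 = 4 * (1 / 2) * s * t * (1 / 2) * (t * (1 / 2)) := by ring
        _ ≤ 4 * c * s * t * u * (a * b) := by gcongr
    nlinarith

section Descent

variable {Δ : ℝ} {m : ℕ} {v : ThreeQubits → ℂ} {z w : ℂ}

theorem GateReach.exists_extend_sq_norm_le (hΔ₀ : 0 < Δ) (hΔ₁ : Δ < 1 / 2)
    (h : GateReach IsTwoLocal (leakage · ≤ Δ) m v (pairState z w))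
    (hzw : ‖z‖ ^ 2 + ‖w‖ ^ 2 = 1) (hz : Δ / 2 < ‖z‖ ^ 2) :
    ∃ z' w' : ℂ, (‖z'‖ ^ 2 + ‖w'‖ ^ 2 = 1 ∧
      GateReach IsTwoLocal (leakage · ≤ Δ) (m + 2) v (pairState z' w')) ∧
      ‖z'‖ ^ 2 ≤ ‖z‖ ^ 2 - Δ ^ 2 / 128 := by
  set a := ‖z‖
  set b := ‖w‖
  set t := √(Δ / 2)
  set u := √(1 - Δ / 2)
  set s := Δ / 8 with hs
  set c := √(1 - s ^ 2)
  have ht : t ^ 2 = Δ / 2 := Real.sq_sqrt (by linarith)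
  have hu : u ^ 2 = 1 - Δ / 2 := Real.sq_sqrt (by linarith)
  have hc : c ^ 2 = 1 - s ^ 2 := Real.sq_sqrt (by rw [hs]; nlinarith)
  have htu : t ^ 2 + u ^ 2 = 1 := by linarith
  have hcs : c ^ 2 + s ^ 2 = 1 := by linarith
  have hu_ge : 1 / 2 ≤ u := by nlinarith [Real.sqrt_nonneg (1 - Δ / 2)]
  have hc_ge : 1 / 2 ≤ c := by nlinarith [Real.sqrt_nonneg (1 - s ^ 2)]
  have hta : t ≤ a := Real.sqrt_le_iff.mpr ⟨norm_nonneg z, hz.le⟩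
  have h₁ := h.phase (z' := ⟨a * u, a * t⟩) (w' := ⟨b * t, b * u⟩)
    (Complex.norm_mk_of_sq_add_sq (norm_nonneg z) (by linear_combination a ^ 2 * htu)).symm
    (Complex.norm_mk_of_sq_add_sq (norm_nonneg w) (by linear_combination b ^ 2 * htu)).symm
    (by rw [leakage_pairState]; nlinarith)
  have hz₂ : (c : ℂ) * ⟨a * u, a * t⟩ - s * ⟨b * t, b * u⟩
      = ⟨c * a * u - s * b * t, c * a * t - s * b * u⟩ := by
    apply Complex.ext <;>
      simp only [Complex.sub_re, Complex.sub_im, Complex.mul_re, Complex.mul_im,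
        Complex.ofReal_re, Complex.ofReal_im] <;> ring
  have hw₂ : (s : ℂ) * ⟨a * u, a * t⟩ + c * ⟨b * t, b * u⟩
      = ⟨s * a * u + c * b * t, s * a * t + c * b * u⟩ := by
    apply Complex.ext <;>
      simp only [Complex.add_re, Complex.add_im, Complex.mul_re, Complex.mul_im,
        Complex.ofReal_re, Complex.ofReal_im] <;> ring
  have hleak : 1 - (c * a * u - s * b * t) ^ 2 - (s * a * t + c * b * u) ^ 2
      = c ^ 2 * t ^ 2 + s ^ 2 * u ^ 2 := by
    linear_combination -(c ^ 2 * u ^ 2 + s ^ 2 * t ^ 2) * hzw - (t ^ 2 + u ^ 2) * hcs - htu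
  have h₂ := h₁.rotate hcs (by rw [hz₂, hw₂, leakage_pairState, hleak]; nlinarith)
  rw [hz₂, hw₂] at h₂
  refine ⟨_, _, ⟨?_, h₂⟩, ?_⟩
  · simp only [Complex.sq_norm, Complex.normSq_mk]
    linear_combination (a ^ 2 + b ^ 2) * (c ^ 2 + s ^ 2) * htu + (a ^ 2 + b ^ 2) * hcs + hzw
  · rw [Complex.sq_norm, Complex.normSq_mk, ← sq, ← sq]
    have := rotate_tilted_sq_le (norm_nonneg z) (norm_nonneg w) hzw (Real.sqrt_nonneg _) htu hta
      hc_ge hu_ge (by positivity) (by rw [ht, hs]; linarith) hcs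
    rw [hs] at this ⊢
    linarith

theorem GateReach.extend_to_111 (hΔ₀ : 0 < Δ)
    (h : GateReach IsTwoLocal (leakage · ≤ Δ) m v (pairState z w))
    (hzw : ‖z‖ ^ 2 + ‖w‖ ^ 2 = 1) (hz : ‖z‖ ^ 2 ≤ Δ / 2) :
    GateReach IsTwoLocal (leakage · ≤ Δ) (m + 2) v (basisState3 (1, 1, 1)) := by
  set a := ‖z‖
  set b := ‖w‖
  have h₁ := h.phase (z' := ⟨0, a⟩) (w' := ⟨0, b⟩)
    (Complex.norm_mk_of_sq_add_sq (norm_nonneg z) (by ring)).symm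
    (Complex.norm_mk_of_sq_add_sq (norm_nonneg w) (by ring)).symm
    (by rw [leakage_pairState]; dsimp only; linarith)
  have hba : b ^ 2 + a ^ 2 = 1 := by linarith
  have hz₂ : (b : ℂ) * ⟨0, a⟩ - a * ⟨0, b⟩ = 0 := by
    apply Complex.ext <;>
      simp only [Complex.sub_re, Complex.sub_im, Complex.mul_re, Complex.mul_im,
        Complex.ofReal_re, Complex.ofReal_im, Complex.zero_re, Complex.zero_im] <;> ring
  have hw₂ : (a : ℂ) * ⟨0, a⟩ + b * ⟨0, b⟩ = Complex.I := by
    apply Complex.ext <;>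
      simp only [Complex.add_re, Complex.add_im, Complex.mul_re, Complex.mul_im,
        Complex.ofReal_re, Complex.ofReal_im, Complex.I_re, Complex.I_im]
    · ring
    · linear_combination hzw
  have h₂ := h₁.rotate hba (by
    rw [hz₂, hw₂, leakage_pairState, Complex.zero_re, Complex.I_im]
    linarith)
  rwa [hz₂, hw₂, pairState_zero_I] at h₂

end Descent

/-- **Tightness of the Traversal Lemma.** There is a constant `C > 0` such that for every
`0 < Δ < 1/2` there are `m ≤ C/Δ²` two-local unitaries (each acting only on qubits {1,2} or
only on qubits {2,3}) mapping `|000⟩` exactly to `|111⟩` such that every intermediate state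
`v_i` satisfies `1 - |⟨000|v_i⟩|² - |⟨111|v_i⟩|² ≤ Δ`. -/
theorem traversal_lemma_tight :
    ∃ C : ℝ, 0 < C ∧ ∀ Δ : ℝ, 0 < Δ → Δ < 1 / 2 →
      ∃ m : ℕ, (m : ℝ) ≤ C / Δ ^ 2 ∧
      ∃ U : ℕ → Matrix (Fin 2 × Fin 2 × Fin 2) (Fin 2 × Fin 2 × Fin 2) ℂ,
        (∀ t < m, U t ∈ Matrix.unitaryGroup (Fin 2 × Fin 2 × Fin 2) ℂ) ∧
        (∀ t < m,
          (∃ A ∈ Matrix.unitaryGroup (Fin 2 × Fin 2) ℂ, ∀ a b c a' b' c',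
              U t (a, b, c) (a', b', c') = A (a, b) (a', b') * (if c = c' then 1 else 0)) ∨
          (∃ A ∈ Matrix.unitaryGroup (Fin 2 × Fin 2) ℂ, ∀ a b c a' b' c',
              U t (a, b, c) (a', b', c') = (if a = a' then 1 else 0) * A (b, c) (b', c'))) ∧
        applySeq U (basisState3 (0, 0, 0)) m = basisState3 (1, 1, 1) ∧
        (∀ i, 1 ≤ i → i ≤ m →
          1 - ‖applySeq U (basisState3 (0, 0, 0)) i (0, 0, 0)‖ ^ 2
            - ‖applySeq U (basisState3 (0, 0, 0)) i (1, 1, 1)‖ ^ 2 ≤ Δ) := by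
  refine ⟨257, by norm_num, fun Δ hΔ₀ hΔ₁ => ?_⟩
  have hΔsq : 0 < Δ ^ 2 := by positivity
  obtain ⟨k, hk, ⟨z, w⟩, ⟨hzw, hreach⟩, hz⟩ := exists_le_of_descent
    (fun k (p : ℂ × ℂ) => ‖p.1‖ ^ 2 + ‖p.2‖ ^ 2 = 1 ∧
      GateReach IsTwoLocal (leakage · ≤ Δ) (2 * k) (basisState3 (0, 0, 0)) (pairState p.1 p.2))
    (fun p => ‖p.1‖ ^ 2) (θ := Δ / 2) (δ := Δ ^ 2 / 128) (s₀ := (1, 0))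
    ⟨by simp, pairState_one_zero ▸ GateReach.refl _⟩
    (fun k p ⟨hp, hreach⟩ hp₁ =>
      let ⟨z', w', hz'w', hdrop⟩ := hreach.exists_extend_sq_norm_le hΔ₀ hΔ₁ hp hp₁
      ⟨(z', w'), hz'w', hdrop⟩)
    ⌈128 / Δ ^ 2⌉₊ (by
      have := Nat.le_ceil (128 / Δ ^ 2)
      rw [div_le_iff₀ hΔsq] at this
      simp only [norm_one]
      nlinarith)
  obtain ⟨U, hU, hend, hleak⟩ := hreach.extend_to_111 hΔ₀ hzw hz
  refine ⟨2 * k + 2, ?_, U, fun t ht => (hU t ht).1, fun t ht => (hU t ht).2, hend, hleak⟩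
  have hk' : (k : ℝ) * Δ ^ 2 < 128 + Δ ^ 2 :=
    calc (k : ℝ) * Δ ^ 2 < (128 / Δ ^ 2 + 1) * Δ ^ 2 := by
          gcongr
          exact (Nat.cast_le.mpr hk).trans_lt (Nat.ceil_lt_add_one (by positivity))
      _ = 128 + Δ ^ 2 := by field_simp
  rw [le_div_iff₀ hΔsq]
  push_cast
  nlinarith
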